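/- arXiv:0902.3006 — 2 statements merged into one kernel-verified Lean document; each statement's English description precedes it below -/
import Mathlib

section
/- Let $d=1$, $b\ge p\ge 1$, and define $u(x)=\int_0^\infty e^{-t}\int_0^1 p(t,x,y)\,dy\,dt$ where $p(t,x,y)=(2\pi\sigma^2(t))^{-1/2}\exp(-(y-xe^{-bt})^2/(2\sigma^2(t)))$ and $\sigma^2(t)=\int_0^t e^{-2bs}\,ds$. Then there are constants $\varepsilon>0$ and $x_1>0$ such that $u(x)\ge\varepsilon x^{-1/b}$ for all $x\ge x_1$; consequently $u\notin L_p((x_1,\infty))$. -/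
open MeasureTheory Set

/-- Variance of the one-dimensional Ornstein–Uhlenbeck process. -/
noncomputable def ouVar (b t : ℝ) : ℝ := ∫ s in (0:ℝ)..t, Real.exp (-2 * b * s)

/-- Transition density of the Ornstein–Uhlenbeck process `dX = -bX dt + dW`. -/
noncomputable def ouKernel (b t x y : ℝ) : ℝ :=
  (2 * Real.pi * ouVar b t) ^ (-(1:ℝ)/2) *
    Real.exp (-((y - x * Real.exp (-b * t)) ^ 2 / (2 * ouVar b t)))

/-- `u(x) = ∫₀^∞ e^{-t} ∫₀¹ p(t,x,y) dy dt`. -/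
noncomputable def ouResolvent (b x : ℝ) : ℝ :=
  ∫ t in Ioi (0:ℝ), Real.exp (-t) * ∫ y in (0:ℝ)..1, ouKernel b t x y

/-! For `x ≥ e^b` put `T = log x / b`. For `t ∈ [T, T + 1]` the Gaussian `p(t, x, ·)` has its mean
`x e^{-bt}` in `[0, 1]` and its variance between `σ²(1)` and `1 / (2b)`, so it is bounded below on
`[0, 1]` by a constant `c`. Integrating `e^{-t} c` over `[T, T + 1]` gives
`u(x) ≥ c (1 - e⁻¹) e^{-T} = ε x^{-1/b}`, and `x^{-p/b}` is not integrable at infinity since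
`p / b ≤ 1`. -/

open Real ProbabilityTheory

lemma ouVar_eq {b : ℝ} (hb : b ≠ 0) (t : ℝ) :
    ouVar b t = (1 - exp (-2 * b * t)) / (2 * b) := by
  have h2b : (-2 : ℝ) * b ≠ 0 := by simp [hb]
  rw [ouVar, intervalIntegral.integral_comp_mul_left (fun s => exp s) h2b, integral_exp]
  simp only [mul_zero, exp_zero, smul_eq_mul]
  field_simp
  ring

lemma continuous_ouVar (b : ℝ) : Continuous (ouVar b) :=
  intervalIntegral.continuous_primitive (fun _ _ => by apply Continuous.intervalIntegrable; fun_prop) 0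

lemma ouVar_pos (b : ℝ) {t : ℝ} (ht : 0 < t) : 0 < ouVar b t :=
  intervalIntegral.intervalIntegral_pos_of_pos_on
    (by apply Continuous.intervalIntegrable; fun_prop) (fun _ _ => exp_pos _) ht

lemma ouVar_mono (b : ℝ) : Monotone (ouVar b) := by
  intro s t hst
  have hint : ∀ u v : ℝ, IntervalIntegrable (fun s => exp (-2 * b * s)) volume u v :=
    fun _ _ => by apply Continuous.intervalIntegrable; fun_prop
  rw [ouVar, ouVar, ← intervalIntegral.integral_add_adjacent_intervals (hint 0 s) (hint s t),
    le_add_iff_nonneg_right]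
  exact intervalIntegral.integral_nonneg hst fun _ _ => (exp_pos _).le

lemma ouVar_le {b : ℝ} (hb : 0 < b) (t : ℝ) : ouVar b t ≤ 1 / (2 * b) := by
  rw [ouVar_eq hb.ne']
  gcongr
  linarith [exp_pos (-2 * b * t)]

lemma ouKernel_eq_gaussianPDFReal (b : ℝ) {t : ℝ} (ht : 0 < t) (x y : ℝ) :
    ouKernel b t x y =
      gaussianPDFReal (x * exp (-b * t)) ⟨ouVar b t, (ouVar_pos b ht).le⟩ y := by
  have hV : 0 ≤ 2 * π * ouVar b t := by have := ouVar_pos b ht; positivity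
  unfold ouKernel gaussianPDFReal
  change _ = (√(2 * π * ouVar b t))⁻¹ * exp (-(y - x * exp (-b * t)) ^ 2 / (2 * ouVar b t))
  rw [sqrt_eq_rpow, ← rpow_neg hV, neg_div, neg_div]

lemma ouKernel_nonneg (b : ℝ) {t : ℝ} (ht : 0 < t) (x y : ℝ) : 0 ≤ ouKernel b t x y := by
  rw [ouKernel_eq_gaussianPDFReal b ht]
  exact gaussianPDFReal_nonneg _ _ _

lemma setIntegral_ouKernel_le_one (b : ℝ) {t : ℝ} (ht : 0 < t) (x : ℝ) (s : Set ℝ) :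
    ∫ y in s, ouKernel b t x y ≤ 1 := by
  have hV : (⟨ouVar b t, (ouVar_pos b ht).le⟩ : NNReal) ≠ 0 :=
    fun h => (ouVar_pos b ht).ne' (congrArg NNReal.toReal h)
  simp_rw [ouKernel_eq_gaussianPDFReal b ht]
  calc _ ≤ ∫ y, gaussianPDFReal (x * exp (-b * t)) ⟨ouVar b t, _⟩ y :=
        setIntegral_le_integral (integrable_gaussianPDFReal _ _)
          (.of_forall (gaussianPDFReal_nonneg _ _))
    _ = 1 := integral_gaussianPDFReal_eq_one _ hV

lemma ouKernel_ge {b t x y : ℝ} (hb : 0 < b) (ht : 1 ≤ t) (hy : |y - x * exp (-b * t)| ≤ 1) :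
    (π / b) ^ (-(1:ℝ) / 2) * exp (-(1 / (2 * ouVar b 1))) ≤ ouKernel b t x y := by
  have hV₁ := ouVar_pos b one_pos
  have hV₁t : ouVar b 1 ≤ ouVar b t := ouVar_mono b ht
  have hVt : 0 < 2 * π * ouVar b t := by have := hV₁.trans_le hV₁t; positivity
  have hprefactor : (π / b) ^ (-(1:ℝ) / 2) ≤ (2 * π * ouVar b t) ^ (-(1:ℝ) / 2) := by
    apply rpow_le_rpow_of_nonpos hVt _ (by norm_num)
    calc 2 * π * ouVar b t ≤ 2 * π * (1 / (2 * b)) := by gcongr; exact ouVar_le hb t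
      _ = π / b := by field_simp
  have hexponent : (y - x * exp (-b * t)) ^ 2 / (2 * ouVar b t) ≤ 1 / (2 * ouVar b 1) := by
    gcongr
    exact sq_le_one_iff_abs_le_one _ |>.mpr hy
  rw [ouKernel]
  gcongr

lemma intervalIntegral_ouKernel_nonneg (b : ℝ) {t : ℝ} (ht : 0 < t) (x : ℝ) :
    0 ≤ ∫ y in (0:ℝ)..1, ouKernel b t x y :=
  intervalIntegral.integral_nonneg zero_le_one fun y _ => ouKernel_nonneg b ht x y

lemma intervalIntegral_ouKernel_le_one (b : ℝ) {t : ℝ} (ht : 0 < t) (x : ℝ) :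
    ∫ y in (0:ℝ)..1, ouKernel b t x y ≤ 1 := by
  rw [intervalIntegral.integral_of_le zero_le_one]
  exact setIntegral_ouKernel_le_one b ht x _

lemma integrableOn_ouResolvent_integrand (b x : ℝ) :
    IntegrableOn (fun t => exp (-t) * ∫ y in (0:ℝ)..1, ouKernel b t x y) (Ioi 0) := by
  have hmeas : Measurable fun q : ℝ × ℝ => ouKernel b q.1 x q.2 := by
    have := (continuous_ouVar b).measurable
    unfold ouKernel; fun_prop
  have hinner : StronglyMeasurable fun t => ∫ y in (0:ℝ)..1, ouKernel b t x y := by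
    simp_rw [intervalIntegral.integral_of_le zero_le_one]
    exact hmeas.stronglyMeasurable.integral_prod_right'
  refine Integrable.mono' (g := fun t => exp (-t)) ?_ ?_ ?_
  · simpa [IntegrableOn] using exp_neg_integrableOn_Ioi 0 one_pos
  · exact ((measurable_exp.comp measurable_neg).stronglyMeasurable.mul hinner).aestronglyMeasurable
  · filter_upwards [ae_restrict_mem measurableSet_Ioi] with t ht
    rw [norm_mul, norm_of_nonneg (exp_pos _).le,
      norm_of_nonneg (intervalIntegral_ouKernel_nonneg b ht x)]
    exact mul_le_of_le_one_right (exp_pos _).le (intervalIntegral_ouKernel_le_one b ht x)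

lemma integral_Icc_exp_neg (T : ℝ) :
    ∫ t in Icc T (T + 1), exp (-t) = (1 - exp (-1)) * exp (-T) := by
  rw [integral_Icc_eq_integral_Ioc, ← intervalIntegral.integral_of_le (by linarith),
    intervalIntegral.integral_comp_neg (fun s => exp s), integral_exp, neg_add, exp_add]
  ring

lemma ouResolvent_ge_of_forall_Icc_le {b x T c : ℝ} (hT : 0 < T)
    (hc : ∀ t ∈ Icc T (T + 1), c ≤ ∫ y in (0:ℝ)..1, ouKernel b t x y) :
    c * (1 - exp (-1)) * exp (-T) ≤ ouResolvent b x := by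
  have hsub : Icc T (T + 1) ⊆ Ioi 0 := fun t ht => hT.trans_le ht.1
  have hint := integrableOn_ouResolvent_integrand b x
  calc c * (1 - exp (-1)) * exp (-T) = ∫ t in Icc T (T + 1), exp (-t) * c := by
        rw [integral_mul_const, integral_Icc_exp_neg]; ring
    _ ≤ ∫ t in Icc T (T + 1), exp (-t) * ∫ y in (0:ℝ)..1, ouKernel b t x y :=
        setIntegral_mono_on (Continuous.integrableOn_Icc (by fun_prop)) (hint.mono_set hsub) measurableSet_Icc
          fun t ht => mul_le_mul_of_nonneg_left (hc t ht) (exp_pos _).le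
    _ ≤ ouResolvent b x :=
        setIntegral_mono_set hint
          (by filter_upwards [ae_restrict_mem measurableSet_Ioi] with t ht
              exact mul_nonneg (exp_pos _).le (intervalIntegral_ouKernel_nonneg b ht x))
          hsub.eventuallyLE

lemma ouResolvent_ge_rpow {b x : ℝ} (hb : 0 < b) (hx : exp b ≤ x) :
    (π / b) ^ (-(1:ℝ) / 2) * exp (-(1 / (2 * ouVar b 1))) * (1 - exp (-1)) * x ^ (-(1 / b))
      ≤ ouResolvent b x := by
  have hx₀ : 0 < x := (exp_pos b).trans_le hx
  set T := log x / b
  have hT : 1 ≤ T := by rw [le_div_iff₀ hb, one_mul, ← log_exp b]; exact log_le_log (exp_pos b) hx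
  have hxT : x ^ (-(1 / b)) = exp (-T) := by rw [rpow_def_of_pos hx₀]; congr 1; ring
  rw [hxT]
  refine ouResolvent_ge_of_forall_Icc_le (by linarith) fun t ht => ?_
  -- the mean `x e^{-bt}` of `X_t` has reached `[0, 1]` once `t ≥ log x / b`
  have hmean : x * exp (-b * t) ∈ Icc (0:ℝ) 1 := by
    refine ⟨by positivity, ?_⟩
    have : log x ≤ b * t := by have := ht.1; rwa [div_le_iff₀ hb, mul_comm] at this
    rw [← exp_log hx₀, ← exp_add, exp_le_one_iff]
    linarith
  calc _ = ∫ _ in (0:ℝ)..1, (π / b) ^ (-(1:ℝ) / 2) * exp (-(1 / (2 * ouVar b 1))) := by simp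
    _ ≤ _ := by
      refine intervalIntegral.integral_mono_on zero_le_one intervalIntegrable_const
        (by apply Continuous.intervalIntegrable; have := continuous_ouVar b; unfold ouKernel; fun_prop)
        fun y hy => ouKernel_ge hb (hT.trans ht.1) ?_
      exact abs_sub_le_iff.2 ⟨by linarith [hy.2, hmean.1], by linarith [hy.1, hmean.2]⟩

lemma not_integrableOn_abs_rpow_of_rpow_le {f : ℝ → ℝ} {a c p x₁ : ℝ} (hc : 0 < c) (hx₁ : 0 < x₁)
    (hp : 0 ≤ p) (hap : a * p ≤ 1) (hf : ∀ x > x₁, c * x ^ (-a) ≤ f x) :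
    ¬ IntegrableOn (fun x => |f x| ^ p) (Ioi x₁) := by
  intro hint
  suffices IntegrableOn (fun x => x ^ (-(a * p))) (Ioi x₁) by
    have := (integrableOn_Ioi_rpow_iff hx₁).mp this
    linarith
  refine Integrable.mono' (hint.const_mul (c ^ p)⁻¹) (by fun_prop) ?_
  filter_upwards [ae_restrict_mem measurableSet_Ioi] with x hx
  have hx₀ : 0 < x := hx₁.trans hx
  have hbound : (c * x ^ (-a)) ^ p ≤ |f x| ^ p :=
    rpow_le_rpow (by positivity) ((hf x hx).trans (le_abs_self _)) hp
  rw [mul_rpow hc.le (rpow_nonneg hx₀.le _), ← rpow_mul hx₀.le, neg_mul] at hbound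
  rw [norm_of_nonneg (rpow_nonneg hx₀.le _), le_inv_mul_iff₀ (rpow_pos_of_pos hc p)]
  exact hbound

/-- Counterexample: if `b ≥ p ≥ 1` then `u(x) ≥ ε x^{-1/b}` for large `x`, so
`u ∉ L_p` near infinity. -/
theorem ou_resolvent_not_Lp (p b : ℝ) (hp : 1 ≤ p) (hb : p ≤ b) :
    ∃ ε > (0:ℝ), ∃ x₁ > (0:ℝ),
      (∀ x ≥ x₁, ε * x ^ (-(1:ℝ)/b) ≤ ouResolvent b x) ∧
      ¬ IntegrableOn (fun x => |ouResolvent b x| ^ p) (Ioi x₁) := by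
  have hb₀ : 0 < b := by linarith
  set ε := (π / b) ^ (-(1:ℝ) / 2) * exp (-(1 / (2 * ouVar b 1))) * (1 - exp (-1))
  have hε : 0 < ε := by
    have := div_pos pi_pos hb₀
    have : exp (-1) < 1 := Real.exp_lt_one_iff.mpr (by norm_num)
    exact mul_pos (by positivity) (by linarith)
  have hlower : ∀ x ≥ exp b, ε * x ^ (-(1:ℝ)/b) ≤ ouResolvent b x := fun x hx => by
    rw [neg_div]; exact ouResolvent_ge_rpow hb₀ hx
  refine ⟨ε, hε, exp b, exp_pos b, hlower, ?_⟩
  refine not_integrableOn_abs_rpow_of_rpow_le (a := 1 / b) hε (exp_pos b) (by linarith) ?_ fun x hx => ?_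
  · rwa [one_div_mul_eq_div, div_le_one hb₀]
  · rw [← neg_div]; exact hlower x hx.le
end

section
/- Suppose for the operator $L u = a^{ij}D_{ij}u + b^i D_i u - cu$ (coefficients independent of $t$) the following holds: for each $f\in L_p((0,\infty)\times\mathbb{R}^d)$ of the form $f(t,x)=e^{-t}g(x)$ with $g\in L_p(\mathbb{R}^d)$ and each $\lambda\ge\lambda_0$, the parabolic equation $\partial_t v+Lv-\lambda v=e^{-t}g$ on $(0,\infty)\times\mathbb{R}^d$ has a unique solution $v$ in the class $\mathcal{W}^2_p(0)$, and the class is invariant under time shifts. Then the solution has the form $v(t,x)=e^{-t}u(x)$ with $u\in W^2_p(\mathbb{R}^d)$ solving the elliptic equation $Lu-(\lambda+1)u=g$. -/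
/-!
The data of the parabolic problem are invariant under the rescaled time shift
`v ↦ e^s v(s + ·, ·)`, `s ≥ 0`: the shift moves the right-hand side `e^{-t} g` to
`e^{-(s+t)} g`, and the factor `e^s` restores it. By uniqueness the solution is a fixed
point of every such shift, i.e. `v(t, x) = e^{-t} v(0, x)`. Substituting this separated
form into the parabolic equation turns `∂_t` into multiplication by `-1` and leaves the
elliptic equation for `u = v(0, ·)`.
-/

noncomputable abbrev Euc (d : ℕ) := EuclideanSpace ℝ (Fin d)

open Real

variable {X : Type*}

def SolvesParabolic (L : (X → ℝ) → X → ℝ) (lam : ℝ) (g : X → ℝ) (v : ℝ → X → ℝ) : Prop :=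
  ∀ t > (0 : ℝ), ∀ x, deriv (fun s => v s x) t + L (v t) x - lam * v t x = exp (-t) * g x

theorem SolvesParabolic.exp_mul_shift {L : (X → ℝ) → X → ℝ} {lam : ℝ} {g : X → ℝ}
    {v : ℝ → X → ℝ} (hL : ∀ (c : ℝ) (φ : X → ℝ), L (fun x => c * φ x) = fun x => c * L φ x)
    (hv : SolvesParabolic L lam g v) {s : ℝ} (hs : 0 ≤ s) :
    SolvesParabolic L lam g (fun t x => exp s * v (s + t) x) := by
  intro t ht x
  have hderiv :
      deriv (fun τ => exp s * v (s + τ) x) t = exp s * deriv (fun τ => v τ x) (s + t) := by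
    rw [deriv_const_mul_field, deriv_comp_const_add (fun τ => v τ x) s t]
  have hexp : exp (-t) = exp s * exp (-(s + t)) := by
    rw [← exp_add]; ring_nf
  simp only [hderiv, hL, hexp]
  linear_combination exp s * hv (s + t) (by linarith) x

theorem eq_exp_neg_mul_of_exp_mul_shift_eq {v : ℝ → X → ℝ}
    (hfix : ∀ s ≥ (0 : ℝ), (fun t x => exp s * v (s + t) x) = v) {t : ℝ} (ht : 0 ≤ t) (x : X) :
    v t x = exp (-t) * v 0 x := by
  have h : exp t * v t x = v 0 x := by simpa using congrFun (congrFun (hfix t ht) 0) x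
  rw [← h, ← mul_assoc, ← exp_add, neg_add_cancel, exp_zero, one_mul]

theorem SolvesParabolic.elliptic_of_separated {L : (X → ℝ) → X → ℝ} {lam : ℝ} {g : X → ℝ}
    {v : ℝ → X → ℝ} {u : X → ℝ}
    (hL : ∀ (c : ℝ) (φ : X → ℝ), L (fun x => c * φ x) = fun x => c * L φ x)
    (hv : SolvesParabolic L lam g v) (hsep : ∀ t > (0 : ℝ), ∀ x, v t x = exp (-t) * u x) (x : X) :
    L u x - (lam + 1) * u x = g x := by
  have hv1 : v 1 = fun x => exp (-1) * u x := funext (hsep 1 one_pos)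
  have hnear : (fun s => v s x) =ᶠ[nhds 1] fun s => exp (-s) * u x := by
    filter_upwards [Ioi_mem_nhds one_pos] with s hs using hsep s hs x
  have hderiv : deriv (fun s => v s x) 1 = -exp (-1) * u x := by
    rw [hnear.deriv_eq]
    simpa using (((hasDerivAt_neg 1).exp).mul_const (u x)).deriv
  have heq := hv 1 one_pos x
  rw [hv1, hderiv, hL] at heq
  refine mul_left_cancel₀ (exp_pos (-1)).ne' ?_
  linear_combination heq

theorem parabolic_to_elliptic_general (d : ℕ) (lam : ℝ)
    (W : Set (ℝ → Euc d → ℝ))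
    (L : (Euc d → ℝ) → (Euc d → ℝ))
    (hL : ∀ (c : ℝ) (φ : Euc d → ℝ), L (fun x => c * φ x) = fun x => c * L φ x)
    (g : Euc d → ℝ)
    (Sol : (ℝ → Euc d → ℝ) → Prop)
    (hSol : ∀ v, Sol v ↔ ∀ t > (0:ℝ), ∀ x : Euc d,
        deriv (fun s => v s x) t + L (v t) x - lam * v t x = Real.exp (-t) * g x)
    (hshift : ∀ v ∈ W, ∀ s : ℝ, 0 ≤ s → (fun t x => Real.exp s * v (s + t) x) ∈ W)
    (huniq : ∃! v, v ∈ W ∧ Sol v) :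
    ∀ v, v ∈ W → Sol v → ∃ u : Euc d → ℝ,
      (∀ t ≥ (0:ℝ), ∀ x : Euc d, v t x = Real.exp (-t) * u x) ∧
      ∀ x : Euc d, L u x - (lam + 1) * u x = g x := by
  intro v hvW hvSol
  have hv : SolvesParabolic L lam g v := (hSol v).mp hvSol
  have hfix : ∀ s ≥ (0 : ℝ), (fun t x => exp s * v (s + t) x) = v := fun s hs =>
    huniq.unique ⟨hshift v hvW s hs, (hSol _).mpr (hv.exp_mul_shift hL hs)⟩ ⟨hvW, hvSol⟩
  have hsep : ∀ t ≥ (0 : ℝ), ∀ x, v t x = exp (-t) * v 0 x := fun t ht =>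
    eq_exp_neg_mul_of_exp_mul_shift_eq hfix ht
  exact ⟨v 0, hsep, hv.elliptic_of_separated hL fun t ht => hsep t ht.le⟩

/-- From parabolic to elliptic: if the parabolic equation
`∂_t v + Lv - λv = e^{-t} g` on `(0,∞) × ℝ^d` has a unique solution in a
time-shift-invariant class `W` (with `L` linear in the scaling sense), then the
solution is of the separated form `v(t,x) = e^{-t} u(x)` with `u` solving the
elliptic equation `Lu - (λ+1)u = g`. -/
theorem parabolic_to_elliptic (d : ℕ) (lam lam0 : ℝ) (hl : lam0 ≤ lam)
    (W : Set (ℝ → Euc d → ℝ))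
    (L : (Euc d → ℝ) → (Euc d → ℝ))
    (hL : ∀ (c : ℝ) (φ : Euc d → ℝ), L (fun x => c * φ x) = fun x => c * L φ x)
    (g : Euc d → ℝ)
    (Sol : (ℝ → Euc d → ℝ) → Prop)
    (hSol : ∀ v, Sol v ↔ ∀ t > (0:ℝ), ∀ x : Euc d,
        deriv (fun s => v s x) t + L (v t) x - lam * v t x = Real.exp (-t) * g x)
    (hshift : ∀ v ∈ W, ∀ s : ℝ, 0 ≤ s → (fun t x => Real.exp s * v (s + t) x) ∈ W)
    (huniq : ∃! v, v ∈ W ∧ Sol v) :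
    ∀ v, v ∈ W → Sol v → ∃ u : Euc d → ℝ,
      (∀ t ≥ (0:ℝ), ∀ x : Euc d, v t x = Real.exp (-t) * u x) ∧
      ∀ x : Euc d, L u x - (lam + 1) * u x = g x :=
  parabolic_to_elliptic_general d lam W L hL g Sol hSol hshift huniq
end
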